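/- Let m_2, m_3 be positive integers, let (U, V) be a centered bivariate Gaussian random vector with U ∼ N(0,1) and V ∼ N(0,1), and set x = E[UV]. Then the joint moments admit the hypergeometric representations: E[U^{2m_2+1} V^{2m_3+1}] = (2m_2+1)!! (2m_3+1)!! · x · F(−m_2, −m_3; 3/2, x^2); E[U^{2m_2} V^{2m_3+2}] = (2m_2−1)!! (2m_3+1)!! · F(−m_2, −m_3−1; 1/2, x^2); and E[U^{2m_2+2} V^{2m_3}] = (2m_2+1)!! (2m_3−1)!! · F(−m_2−1, −m_3; 1/2, x^2). -/

import Mathlib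

open MeasureTheory ProbabilityTheory Finset
open scoped NNReal

/-- A centered (jointly) Gaussian random vector: every real-linear combination of the
components is a centered Gaussian random variable, and each component is non-degenerate. -/
def IsCenteredGaussianVec {Ω : Type*} [MeasureSpace Ω] {n : ℕ}
    (X : Fin n → Ω → ℝ) : Prop :=
  (∀ i, Measurable (X i)) ∧
  (∀ a : Fin n → ℝ, ∃ v : ℝ≥0,
      Measure.map (fun ω => ∑ i, a i * X i ω) ℙ = gaussianReal 0 v) ∧
  (∀ i, ∃ v : ℝ≥0, 0 < v ∧ Measure.map (X i) ℙ = gaussianReal 0 v)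

/-- `df k = (2k-1)!! = 1·3⋯(2k-1)`, with `df 0 = (-1)!! = 1`. -/
noncomputable def df (k : ℕ) : ℝ := ∏ i ∈ Finset.range k, (2 * (i : ℝ) + 1)

/-- A centered bivariate Gaussian random vector `(U, V)` with standard `N(0,1)` marginals. -/
def IsStdBivGaussian {Ω : Type*} [MeasureSpace Ω] (U V : Ω → ℝ) : Prop :=
  Measurable U ∧ Measurable V ∧
  (∀ a b : ℝ, ∃ v : ℝ≥0,
      Measure.map (fun ω => a * U ω + b * V ω) ℙ = gaussianReal 0 v) ∧
  Measure.map U ℙ = gaussianReal 0 1 ∧ Measure.map V ℙ = gaussianReal 0 1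

/-- The terminating Gauss hypergeometric series `F(-a, -b; c, z)
= Σ_{j=0}^{min(a,b)} ((-a)_j (-b)_j / (c)_j) z^j / j!`. -/
noncomputable def hyperF (a b : ℕ) (c z : ℝ) : ℝ :=
  ∑ j ∈ Finset.range (min a b + 1),
    ((∏ l ∈ Finset.range j, (-(a : ℝ) + l)) * (∏ l ∈ Finset.range j, (-(b : ℝ) + l)) /
        ∏ l ∈ Finset.range j, (c + l)) * z ^ j / (Nat.factorial j)

/-!
For every `a`, the variable `a U + V` is a centered Gaussian with variance
`a ^ 2 + 2 ρ a + 1`, where `ρ = E[U V]`, so Gaussian integration by parts gives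
`E[(a U + V) ^ (2n)] = (2n - 1)!! (a ^ 2 + 2 ρ a + 1) ^ n`. Expanding the left side binomially
and comparing coefficients of `a ^ p` yields
`C(2n, p) E[U ^ p V ^ (2n - p)] = (2n - 1)!! [X ^ p] (X ^ 2 + 2 ρ X + 1) ^ n`, and this trinomial
coefficient, rewritten with Pochhammer symbols, is the terminating hypergeometric sum.
-/

open Real Polynomial
open scoped Nat

@[simp] lemma df_zero : df 0 = 1 := prod_range_zero _

@[simp] lemma df_one : df 1 = 1 := by simp [df]

lemma df_succ (k : ℕ) : df (k + 1) = df k * (2 * k + 1) :=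
  prod_range_succ _ k

lemma df_eq_factorial_div (k : ℕ) : df k = (2 * k)! / (2 ^ k * k !) := by
  induction k with
  | zero => simp
  | succ k ih =>
    rw [df_succ, ih, show 2 * (k + 1) = 2 * k + 1 + 1 by ring]
    push_cast [Nat.factorial_succ]
    field_simp
    ring

lemma df_succ_eq_factorial_div (k : ℕ) : df (k + 1) = (2 * k + 1)! / (2 ^ k * k !) := by
  rw [df_succ, df_eq_factorial_div]
  push_cast [Nat.factorial_succ]
  field_simp

lemma df_add (s t : ℕ) :
    df (s + t) = df s * (2 ^ t * ∏ l ∈ range t, ((2 * s + 1) / 2 + (l : ℝ))) := by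
  rw [df, prod_range_add, ← df, show (2 : ℝ) ^ t = ∏ _l ∈ range t, (2 : ℝ) by simp,
    ← prod_mul_distrib]
  congr 1
  refine prod_congr rfl fun l _ => ?_
  push_cast
  ring

lemma prod_one_half_add (t : ℕ) : ∏ l ∈ range t, (1 / 2 + (l : ℝ)) = df t / 2 ^ t := by
  rw [eq_div_iff (by positivity)]
  simpa [mul_comm] using (df_add 0 t).symm

lemma prod_three_halves_add (t : ℕ) :
    ∏ l ∈ range t, (3 / 2 + (l : ℝ)) = df (t + 1) / 2 ^ t := by
  rw [eq_div_iff (by positivity), add_comm t, df_add 1 t]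
  norm_num
  ring

lemma Nat.cast_descFactorial_eq_div (K : Type*) [DivisionSemiring K] [CharZero K] {n k : ℕ}
    (h : k ≤ n) : (n.descFactorial k : K) = n ! / (n - k)! := by
  rw [eq_div_iff_mul_eq (Nat.cast_ne_zero.2 (Nat.factorial_pos _).ne')]
  rw_mod_cast [mul_comm, Nat.factorial_mul_descFactorial h]

lemma prod_neg_add_mul_prod_neg_add {R : Type*} [CommRing R] {a b t : ℕ} (ha : t ≤ a)
    (hb : t ≤ b) :
    (∏ l ∈ range t, (-(a : R) + l)) * ∏ l ∈ range t, (-(b : R) + l) =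
      a.descFactorial t * b.descFactorial t := by
  rw [← prod_mul_distrib, Nat.descFactorial_eq_prod_range, Nat.descFactorial_eq_prod_range,
    Nat.cast_prod, Nat.cast_prod, ← prod_mul_distrib]
  refine prod_congr rfl fun l hl => ?_
  simp only [mem_range] at hl
  push_cast [Nat.cast_sub (hl.trans_le ha).le, Nat.cast_sub (hl.trans_le hb).le]
  ring

namespace Polynomial

variable {R : Type*} [CommSemiring R]

lemma coeff_C_mul_X_add_one_pow (c : R) (m d : ℕ) :
    ((C c * X + 1) ^ m).coeff d = m.choose d * c ^ d := by
  have h : (C c * X + 1) ^ m = ((X + 1) ^ m).comp (C c * X) := by simp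
  rw [h, comp_C_mul_X_coeff, coeff_X_add_one_pow]

lemma coeff_X_sq_add_C_mul_X_add_one_pow (c : R) (n p : ℕ) :
    ((X ^ 2 + C c * X + 1) ^ n).coeff p = ∑ m ∈ range (n + 1),
      if 2 * (n - m) ≤ p then n.choose m * (m.choose (p - 2 * (n - m)) * c ^ (p - 2 * (n - m)))
      else 0 := by
  rw [show X ^ 2 + C c * X + 1 = (C c * X + 1) + X ^ 2 by ring, add_pow, finsetSum_coeff]
  refine sum_congr rfl fun m _ => ?_
  rw [← pow_mul, mul_comm, ← mul_assoc, coeff_mul_X_pow', coeff_natCast_mul,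
    coeff_C_mul_X_add_one_pow]

lemma coeff_X_sq_add_C_mul_X_add_one_pow_add {e : ℕ} (he : e ≤ 1) (c : R) (a b : ℕ) :
    ((X ^ 2 + C c * X + 1) ^ (a + b + e)).coeff (2 * a + e) = ∑ t ∈ range (min a b + 1),
      (a + b + e).choose (b + e + t) * ((b + e + t).choose (2 * t + e) * c ^ (2 * t + e)) := by
  -- Write `m = b + e + t`: smaller `m` leave too many factors `X ^ 2` for degree `2 * a + e`,
  -- and for `t > b` the binomial `(b + e + t).choose (2 * t + e)` vanishes.
  rw [coeff_X_sq_add_C_mul_X_add_one_pow, show a + b + e + 1 = b + e + (a + 1) by ring,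
    sum_range_add, sum_eq_zero fun m hm => if_neg (by simp only [mem_range] at hm; omega), zero_add]
  symm
  refine sum_subset (by simp) (fun t ht hmin => ?_) |>.trans (sum_congr rfl fun t ht => ?_)
  · simp only [mem_range, Order.lt_add_one_iff, le_inf_iff, not_and, not_le] at ht hmin
    rw [Nat.choose_eq_zero_of_lt (n := b + e + t) (by omega), Nat.cast_zero, zero_mul, mul_zero]
  · simp only [mem_range, Order.lt_add_one_iff] at ht
    rw [if_pos (by omega), show 2 * a + e - 2 * (a + b + e - (b + e + t)) = 2 * t + e by omega]

end Polynomial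

lemma Polynomial.coeff_eq_of_eval_eq_sum {R : Type*} [CommRing R] [IsDomain R] [Infinite R]
    {q : R[X]} {c : ℕ → R} {N p : ℕ} (h : ∀ a, q.eval a = ∑ k ∈ range N, c k * a ^ k)
    (hp : p < N) : q.coeff p = c p := by
  have hq : q = ∑ k ∈ range N, C (c k) * X ^ k := funext fun a => by simp [h, eval_finsetSum]
  simp [hq, finsetSum_coeff, hp]

lemma choose_mul_df_mul_df_mul_hyperF_one_half (a b : ℕ) (x : ℝ) :
    (2 * (a + b)).choose (2 * a) * (df a * df b * hyperF a b (1 / 2) (x ^ 2)) =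
      df (a + b) * ((X ^ 2 + C (2 * x) * X + 1) ^ (a + b)).coeff (2 * a) := by
  have h := coeff_X_sq_add_C_mul_X_add_one_pow_add (e := 0) zero_le_one (2 * x) a b
  simp only [add_zero] at h
  rw [h, hyperF, mul_sum, mul_sum, mul_sum]
  refine sum_congr rfl fun t ht => ?_
  obtain ⟨hta, htb⟩ := le_min_iff.1 (Nat.lt_succ_iff.1 (mem_range.1 ht))
  rw [prod_neg_add_mul_prod_neg_add hta htb, prod_one_half_add,
    Nat.cast_descFactorial_eq_div ℝ hta, Nat.cast_descFactorial_eq_div ℝ htb,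
    Nat.cast_choose ℝ (by omega : 2 * a ≤ 2 * (a + b)),
    Nat.cast_choose ℝ (by omega : b + t ≤ a + b), Nat.cast_choose ℝ (by omega : 2 * t ≤ b + t),
    show 2 * (a + b) - 2 * a = 2 * b by omega, show a + b - (b + t) = a - t by omega,
    show b + t - 2 * t = b - t by omega, df_eq_factorial_div a, df_eq_factorial_div b,
    df_eq_factorial_div t, df_eq_factorial_div (a + b)]
  field_simp
  ring

lemma choose_mul_df_mul_df_mul_hyperF_three_halves (a b : ℕ) (x : ℝ) :
    (2 * (a + b + 1)).choose (2 * a + 1) *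
        (df (a + 1) * df (b + 1) * x * hyperF a b (3 / 2) (x ^ 2)) =
      df (a + b + 1) * ((X ^ 2 + C (2 * x) * X + 1) ^ (a + b + 1)).coeff (2 * a + 1) := by
  rw [coeff_X_sq_add_C_mul_X_add_one_pow_add le_rfl (2 * x) a b, hyperF, mul_sum, mul_sum,
    mul_sum]
  refine sum_congr rfl fun t ht => ?_
  obtain ⟨hta, htb⟩ := le_min_iff.1 (Nat.lt_succ_iff.1 (mem_range.1 ht))
  rw [prod_neg_add_mul_prod_neg_add hta htb, prod_three_halves_add,
    Nat.cast_descFactorial_eq_div ℝ hta, Nat.cast_descFactorial_eq_div ℝ htb,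
    Nat.cast_choose ℝ (by omega : 2 * a + 1 ≤ 2 * (a + b + 1)),
    Nat.cast_choose ℝ (by omega : b + 1 + t ≤ a + b + 1),
    Nat.cast_choose ℝ (by omega : 2 * t + 1 ≤ b + 1 + t),
    show 2 * (a + b + 1) - (2 * a + 1) = 2 * b + 1 by omega,
    show a + b + 1 - (b + 1 + t) = a - t by omega, show b + 1 + t - (2 * t + 1) = b - t by omega,
    df_succ_eq_factorial_div a, df_succ_eq_factorial_div b, df_succ_eq_factorial_div t,
    df_eq_factorial_div (a + b + 1)]
  field_simp
  ring

namespace ProbabilityTheory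

lemma integrable_pow_gaussianReal (μ : ℝ) (v : ℝ≥0) (n : ℕ) :
    Integrable (fun x : ℝ => x ^ n) (gaussianReal μ v) := by
  refine (integrable_norm_iff (by fun_prop)).1 ?_
  simpa only [norm_pow, id] using
    (memLp_id_gaussianReal (μ := μ) (v := v) n).integrable_norm_pow'

lemma integrable_gaussianPDFReal_mul_pow (μ : ℝ) {v : ℝ≥0} (hv : v ≠ 0) (n : ℕ) :
    Integrable (fun x => gaussianPDFReal μ v x * x ^ n) := by
  have h := integrable_pow_gaussianReal μ v n
  rw [gaussianReal_of_var_ne_zero μ hv, integrable_withDensity_iff_integrable_smul'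
    (measurable_gaussianPDF μ v) (ae_of_all _ fun _ => gaussianPDF_lt_top)] at h
  simpa only [toReal_gaussianPDF, smul_eq_mul] using h

lemma hasDerivAt_gaussianPDFReal_zero (v : ℝ≥0) (x : ℝ) :
    HasDerivAt (gaussianPDFReal 0 v) (-(x / v) * gaussianPDFReal 0 v x) x := by
  have h : HasDerivAt (fun y : ℝ => -y ^ 2 / (2 * v)) (-(x / v)) x :=
    (((hasDerivAt_id x).fun_pow 2).fun_neg.div_const (2 * (v : ℝ))).congr_deriv
      (by simp only [Nat.cast_ofNat, id_eq, Nat.add_one_sub_one, pow_one, mul_one]; ring)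
  simp only [gaussianPDFReal_def, sub_zero]
  exact (h.exp.const_mul (√(2 * π * v))⁻¹).congr_deriv (by ring)

lemma integral_pow_add_two_gaussianReal (v : ℝ≥0) (n : ℕ) :
    ∫ x, x ^ (n + 2) ∂gaussianReal 0 v = (n + 1) * v * ∫ x, x ^ n ∂gaussianReal 0 v := by
  rcases eq_or_ne v 0 with rfl | hv
  · simp [gaussianReal_zero_var]
  simp only [integral_gaussianReal_eq_integral_smul hv, smul_eq_mul]
  have hderiv : ∀ x, HasDerivAt (fun y => y ^ (n + 1) * gaussianPDFReal 0 v y)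
      ((n + 1) * (gaussianPDFReal 0 v x * x ^ n) -
        (v : ℝ)⁻¹ * (gaussianPDFReal 0 v x * x ^ (n + 2))) x := by
    intro x
    exact ((hasDerivAt_pow (n + 1) x).mul (hasDerivAt_gaussianPDFReal_zero v x)).congr_deriv
      (by push_cast; field_simp; ring)
  have hint := integrable_gaussianPDFReal_mul_pow 0 hv
  have h := integral_eq_zero_of_hasDerivAt_of_integrable hderiv
    (((hint n).const_mul _).sub ((hint (n + 2)).const_mul _))
    (by simpa only [mul_comm] using hint (n + 1))
  rw [integral_sub ((hint n).const_mul _) ((hint (n + 2)).const_mul _), integral_const_mul,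
    integral_const_mul, sub_eq_zero] at h
  field_simp at h
  linear_combination -h

lemma integral_pow_two_mul_gaussianReal (v : ℝ≥0) (k : ℕ) :
    ∫ x, x ^ (2 * k) ∂gaussianReal 0 v = df k * v ^ k := by
  induction k with
  | zero => simp
  | succ k ih =>
    rw [mul_add_one, integral_pow_add_two_gaussianReal, ih, df_succ]
    push_cast; ring

variable {Ω : Type*} [MeasureSpace Ω]

lemma HasLaw.integrable_pow_of_gaussianReal {Y : Ω → ℝ} {μ : ℝ} {v : ℝ≥0}
    (hY : HasLaw Y (gaussianReal μ v)) (n : ℕ) : Integrable (fun ω => Y ω ^ n) := by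
  have h := integrable_pow_gaussianReal μ v n
  rw [← hY.map_eq] at h
  exact h.comp_aemeasurable hY.aemeasurable

lemma HasLaw.integral_pow_two_mul_of_gaussianReal {Y : Ω → ℝ} {v : ℝ≥0}
    (hY : HasLaw Y (gaussianReal 0 v)) (k : ℕ) : ∫ ω, Y ω ^ (2 * k) = df k * v ^ k := by
  rw [← integral_pow_two_mul_gaussianReal, ← hY.integral_comp (by fun_prop)]
  rfl

end ProbabilityTheory

namespace IsStdBivGaussian

variable {Ω : Type*} [MeasureSpace Ω] {U V : Ω → ℝ} (h : IsStdBivGaussian U V)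
include h

lemma hasLaw_fst : HasLaw U (gaussianReal 0 1) := ⟨h.1.aemeasurable, h.2.2.2.1⟩

lemma hasLaw_snd : HasLaw V (gaussianReal 0 1) := ⟨h.2.1.aemeasurable, h.2.2.2.2⟩

lemma exists_hasLaw_mul_add (a : ℝ) :
    ∃ v, HasLaw (fun ω => a * U ω + V ω) (gaussianReal 0 v) := by
  obtain ⟨v, hv⟩ := h.2.2.1 a 1
  exact ⟨v, ((h.1.const_mul a).add h.2.1).aemeasurable, by simpa only [one_mul] using hv⟩

lemma integrable_pow_mul_pow (k l : ℕ) : Integrable (fun ω => U ω ^ k * V ω ^ l) := by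
  have hmemLp {Y : Ω → ℝ} (hY : HasLaw Y (gaussianReal 0 1)) (n : ℕ) :
      MemLp (fun ω => Y ω ^ n) 2 :=
    (memLp_two_iff_integrable_sq (hY.aemeasurable.pow_const n).aestronglyMeasurable).2 <| by
      simpa only [← pow_mul] using hY.integrable_pow_of_gaussianReal (n * 2)
  exact (hmemLp h.hasLaw_fst k).integrable_mul (hmemLp h.hasLaw_snd l)

lemma integral_mul_add_pow_eq_sum (a : ℝ) (n : ℕ) :
    ∫ ω, (a * U ω + V ω) ^ n =
      ∑ k ∈ range (n + 1), n.choose k * (∫ ω, U ω ^ k * V ω ^ (n - k)) * a ^ k := by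
  have expand : (fun ω => (a * U ω + V ω) ^ n) =
      fun ω => ∑ k ∈ range (n + 1), (n.choose k * a ^ k) * (U ω ^ k * V ω ^ (n - k)) := by
    ext ω
    rw [add_pow]
    exact sum_congr rfl fun k _ => by ring
  rw [expand, integral_finsetSum _ fun k _ => (h.integrable_pow_mul_pow k _).const_mul _]
  exact sum_congr rfl fun k _ => by rw [integral_const_mul]; ring

lemma integral_mul_add_sq (a : ℝ) :
    ∫ ω, (a * U ω + V ω) ^ 2 = a ^ 2 + 2 * (∫ ω, U ω * V ω) * a + 1 := by
  have hU := h.hasLaw_fst.integral_pow_two_mul_of_gaussianReal 1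
  have hV := h.hasLaw_snd.integral_pow_two_mul_of_gaussianReal 1
  simp only [mul_one, df_one, NNReal.coe_one, one_pow] at hU hV
  rw [h.integral_mul_add_pow_eq_sum]
  simp only [sum_range_succ, range_one, sum_singleton, Nat.choose_zero_right,
    Nat.choose_succ_self_right, Nat.choose_self, Nat.cast_one, Nat.cast_ofNat, pow_zero, pow_one,
    one_mul, mul_one, tsub_zero, tsub_self, Nat.add_one_sub_one, Nat.reduceAdd, hU, hV]
  ring

lemma integral_mul_add_pow (a : ℝ) (n : ℕ) :
    ∫ ω, (a * U ω + V ω) ^ (2 * n) = df n * (a ^ 2 + 2 * (∫ ω, U ω * V ω) * a + 1) ^ n := by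
  obtain ⟨v, hv⟩ := h.exists_hasLaw_mul_add a
  have hvar := hv.integral_pow_two_mul_of_gaussianReal 1
  rw [mul_one, df_one, one_mul, pow_one, h.integral_mul_add_sq] at hvar
  rw [hv.integral_pow_two_mul_of_gaussianReal, hvar]

lemma choose_mul_integral_pow_mul_pow {p q n : ℕ} (hpq : p + q = 2 * n) :
    (2 * n).choose p * ∫ ω, U ω ^ p * V ω ^ q =
      df n * ((X ^ 2 + C (2 * ∫ ω, U ω * V ω) * X + 1) ^ n).coeff p := by
  have hcoeff := coeff_eq_of_eval_eq_sum
    (q := C (df n) * (X ^ 2 + C (2 * ∫ ω, U ω * V ω) * X + 1) ^ n)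
    (c := fun k => (2 * n).choose k * ∫ ω, U ω ^ k * V ω ^ (2 * n - k))
    (N := 2 * n + 1) (p := p)
    (fun a => by
      simp only [eval_mul, eval_C, eval_pow, eval_add, eval_X, eval_one]
      rw [← h.integral_mul_add_pow, h.integral_mul_add_pow_eq_sum])
    (by omega)
  rw [coeff_C_mul] at hcoeff
  rw [hcoeff, show q = 2 * n - p by omega]

theorem integral_pow_two_mul_mul_pow_two_mul (a b : ℕ) :
    ∫ ω, U ω ^ (2 * a) * V ω ^ (2 * b) =
      df a * df b * hyperF a b (1 / 2) ((∫ ω, U ω * V ω) ^ 2) := by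
  have hmom := h.choose_mul_integral_pow_mul_pow (p := 2 * a) (q := 2 * b) (n := a + b) (by ring)
  rw [← choose_mul_df_mul_df_mul_hyperF_one_half] at hmom
  exact mul_left_cancel₀ (Nat.cast_ne_zero.2 (Nat.choose_pos (by omega)).ne') hmom

theorem integral_pow_two_mul_add_one_mul_pow_two_mul_add_one (a b : ℕ) :
    ∫ ω, U ω ^ (2 * a + 1) * V ω ^ (2 * b + 1) =
      df (a + 1) * df (b + 1) * (∫ ω, U ω * V ω) *
        hyperF a b (3 / 2) ((∫ ω, U ω * V ω) ^ 2) := by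
  have hmom := h.choose_mul_integral_pow_mul_pow (p := 2 * a + 1) (q := 2 * b + 1)
    (n := a + b + 1) (by ring)
  rw [← choose_mul_df_mul_df_mul_hyperF_three_halves] at hmom
  exact mul_left_cancel₀ (Nat.cast_ne_zero.2 (Nat.choose_pos (by omega)).ne') hmom

end IsStdBivGaussian

theorem stmt_19_general (m2 m3 : ℕ)
    {Ω : Type*} [MeasureSpace Ω]
    (U V : Ω → ℝ) (hUV : IsStdBivGaussian U V) :
    (∫ ω, U ω ^ (2 * m2 + 1) * V ω ^ (2 * m3 + 1) ∂ℙ) =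
      df (m2 + 1) * df (m3 + 1) * (∫ ω, U ω * V ω ∂ℙ) *
        hyperF m2 m3 (3 / 2) ((∫ ω, U ω * V ω ∂ℙ) ^ 2) ∧
    (∫ ω, U ω ^ (2 * m2) * V ω ^ (2 * m3 + 2) ∂ℙ) =
      df m2 * df (m3 + 1) * hyperF m2 (m3 + 1) (1 / 2) ((∫ ω, U ω * V ω ∂ℙ) ^ 2) ∧
    (∫ ω, U ω ^ (2 * m2 + 2) * V ω ^ (2 * m3) ∂ℙ) =
      df (m2 + 1) * df m3 * hyperF (m2 + 1) m3 (1 / 2) ((∫ ω, U ω * V ω ∂ℙ) ^ 2) :=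
  ⟨hUV.integral_pow_two_mul_add_one_mul_pow_two_mul_add_one m2 m3,
    hUV.integral_pow_two_mul_mul_pow_two_mul m2 (m3 + 1),
    hUV.integral_pow_two_mul_mul_pow_two_mul (m2 + 1) m3⟩

theorem stmt_19 (m2 m3 : ℕ) (hm2 : 1 ≤ m2) (hm3 : 1 ≤ m3)
    {Ω : Type*} [MeasureSpace Ω] [IsProbabilityMeasure (ℙ : Measure Ω)]
    (U V : Ω → ℝ) (hUV : IsStdBivGaussian U V) :
    (∫ ω, U ω ^ (2 * m2 + 1) * V ω ^ (2 * m3 + 1) ∂ℙ) =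
      df (m2 + 1) * df (m3 + 1) * (∫ ω, U ω * V ω ∂ℙ) *
        hyperF m2 m3 (3 / 2) ((∫ ω, U ω * V ω ∂ℙ) ^ 2) ∧
    (∫ ω, U ω ^ (2 * m2) * V ω ^ (2 * m3 + 2) ∂ℙ) =
      df m2 * df (m3 + 1) * hyperF m2 (m3 + 1) (1 / 2) ((∫ ω, U ω * V ω ∂ℙ) ^ 2) ∧
    (∫ ω, U ω ^ (2 * m2 + 2) * V ω ^ (2 * m3) ∂ℙ) =
      df (m2 + 1) * df m3 * hyperF (m2 + 1) m3 (1 / 2) ((∫ ω, U ω * V ω ∂ℙ) ^ 2) :=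
  stmt_19_general m2 m3 U V hUV
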